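/- Let S be a valid solution of an Evolomino instance and let A = a₁,…,a_L be one of its arrows such that every white cell of the board that is orthogonally adjacent to an interior arrow cell a_i (1 < i < L) and distinct from a_{i−1} and a_{i+1} is shaded (the arrow is 'fenced'). Then exactly two blocks of S meet A; the first block B₁ (in arrow order) contains exactly one arrow cell, which is distinct from a_L; and the second block B₂ satisfies B₂ ∩ {a₁,…,a_L} = {a_L}, |B₂| = |B₁| + 1, and v +ᵥ B₁ ⊆ B₂ for some v ∈ ℤ × ℤ. -/

import Mathlib

open Pointwise

/-- A cell of the (infinite) grid. -/
abbrev Cell : Type := ℤ × ℤ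

/-- Orthogonal adjacency: the two cells differ by exactly 1 in exactly one coordinate. -/
def Adj (c d : Cell) : Prop :=
  (c.1 = d.1 ∧ (c.2 - d.2 = 1 ∨ d.2 - c.2 = 1)) ∨
  (c.2 = d.2 ∧ (c.1 - d.1 = 1 ∨ d.1 - c.1 = 1))

/-- The `p × q` board `{1,…,p} × {1,…,q} ⊆ ℤ × ℤ`. -/
def board (p q : ℕ) : Set Cell :=
  {c | 1 ≤ c.1 ∧ c.1 ≤ (p : ℤ) ∧ 1 ≤ c.2 ∧ c.2 ≤ (q : ℤ)}

/-- The data of an Evolomino instance. -/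
structure EvoInstance where
  p : ℕ
  q : ℕ
  shaded : Set Cell
  presq : Finset Cell
  arrows : List (List Cell)

/-- A cell is white if it lies on the board and is not shaded. -/
def EvoInstance.White (I : EvoInstance) (c : Cell) : Prop :=
  c ∈ board I.p I.q ∧ c ∉ I.shaded

/-- A legal arrow: a duplicate-free list of at least two white cells in which
consecutive cells are orthogonally adjacent. -/
def IsArrow (I : EvoInstance) (A : List Cell) : Prop :=
  A.Nodup ∧ 2 ≤ A.length ∧ (∀ c ∈ A, I.White c) ∧ A.Chain' Adj

/-- Well-formedness of an Evolomino instance: positive dimensions, shaded cells on the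
board, pre-drawn squares white, every arrow legal, and no cell on two arrows. -/
def EvoInstance.WellFormed (I : EvoInstance) : Prop :=
  0 < I.p ∧ 0 < I.q ∧ I.shaded ⊆ board I.p I.q ∧
  (∀ c ∈ I.presq, I.White c) ∧
  (∀ A ∈ I.arrows, IsArrow I A) ∧
  I.arrows.Pairwise (fun A B => ∀ c ∈ A, c ∉ B)

/-- A solution: a set of white cells containing the pre-drawn squares. -/
def IsSolution (I : EvoInstance) (S : Set Cell) : Prop :=
  (∀ c ∈ S, I.White c) ∧ ↑I.presq ⊆ S

/-- Connectivity inside `S` via orthogonal adjacency. -/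
def ConnIn (S : Set Cell) : Cell → Cell → Prop :=
  Relation.ReflTransGen (fun x y => x ∈ S ∧ y ∈ S ∧ Adj x y)

/-- `B` is a block of `S`: a connected component of `S` under orthogonal adjacency. -/
def IsBlock (S : Set Cell) (B : Set Cell) : Prop :=
  ∃ c ∈ S, B = {d | d ∈ S ∧ ConnIn S c d}

/-- The cell `c` lies on some arrow of the instance. -/
def OnArrow (I : EvoInstance) (c : Cell) : Prop :=
  ∃ A ∈ I.arrows, c ∈ A

/-- The set `B` meets the arrow `A`. -/
def Meets (B : Set Cell) (A : List Cell) : Prop :=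
  ∃ c ∈ B, c ∈ A

/-- The first position along the arrow `A` at which a cell of `B` occurs. -/
noncomputable def firstHit (A : List Cell) (B : Set Cell) : ℕ :=
  sInf {i | ∃ h : i < A.length, A.get ⟨i, h⟩ ∈ B}

/-- `B` and `B'` are consecutive blocks of `S` (in arrow order) meeting the arrow `A`. -/
def Consecutive (S : Set Cell) (A : List Cell) (B B' : Set Cell) : Prop :=
  IsBlock S B ∧ IsBlock S B' ∧ Meets B A ∧ Meets B' A ∧
  firstHit A B < firstHit A B' ∧
  ∀ B'', IsBlock S B'' → Meets B'' A →
    firstHit A B'' ≤ firstHit A B ∨ firstHit A B' ≤ firstHit A B''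

/-- A valid solution of an Evolomino instance. -/
def IsValidSolution (I : EvoInstance) (S : Set Cell) : Prop :=
  IsSolution I S ∧
  (∀ B, IsBlock S B → ∃! c, c ∈ B ∧ OnArrow I c) ∧
  (∀ A ∈ I.arrows, ∃ B B', IsBlock S B ∧ IsBlock S B' ∧ B ≠ B' ∧
    Meets B A ∧ Meets B' A) ∧
  (∀ A ∈ I.arrows, ∀ B B', Consecutive S A B B' →
    B'.ncard = B.ncard + 1 ∧ ∃ v : Cell, v +ᵥ B ⊆ B')

/-- The arrow `A` is fenced: every board cell orthogonally adjacent to an interior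
arrow cell `a_i` (`1 < i < L`) and distinct from `a_{i-1}` and `a_{i+1}` is shaded
(so no white cell other than the arrow's own route neighbours an interior cell). -/
def Fenced (I : EvoInstance) (A : List Cell) : Prop :=
  ∀ i : ℕ, ∀ _h1 : 0 < i, ∀ h2 : i + 1 < A.length,
    ∀ c ∈ board I.p I.q,
      Adj c (A.get ⟨i, by omega⟩) →
      c ≠ A.get ⟨i - 1, by omega⟩ →
      c ≠ A.get ⟨i + 1, h2⟩ →
      c ∈ I.shaded


/-!
Around an interior cell of a fenced arrow the only white cells are its two neighbours on the
arrow. Since a block contains a single arrow cell, the block through an interior cell is a single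
square. A block that follows another one along the arrow has one more square than its
predecessor, hence at least two, and its first arrow cell is not `a₁`; so that cell is `a_L`.
Therefore the first block is followed by exactly one block, the block of `a_L`.
-/

theorem Adj.symm {c d : Cell} (h : Adj c d) : Adj d c := by
  unfold Adj at *
  omega

theorem Adj.ne {c d : Cell} (h : Adj c d) : c ≠ d := by
  rintro rfl
  unfold Adj at h
  omega

theorem board_finite (p q : ℕ) : (board p q).Finite :=
  (Set.finite_Icc ((1 : ℤ), (1 : ℤ)) ((p : ℤ), (q : ℤ))).subset
    fun _ hc => ⟨⟨hc.1, hc.2.2.1⟩, hc.2.1, hc.2.2.2⟩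

namespace ConnIn

variable {S : Set Cell} {c d e : Cell}

theorem symm (h : ConnIn S c d) : ConnIn S d c := by
  induction h with
  | refl => exact .refl
  | tail _ hxy ih => exact .head ⟨hxy.2.1, hxy.1, hxy.2.2.symm⟩ ih

theorem trans (h : ConnIn S c d) (h' : ConnIn S d e) : ConnIn S c e :=
  Relation.ReflTransGen.trans h h'

end ConnIn

namespace IsBlock

variable {S B B' : Set Cell}

theorem subset (hB : IsBlock S B) : B ⊆ S := by
  obtain ⟨c, -, rfl⟩ := hB
  exact fun _ hd => hd.1

theorem eq_setOf_connIn (hB : IsBlock S B) {a : Cell} (ha : a ∈ B) :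
    B = {d | d ∈ S ∧ ConnIn S a d} := by
  obtain ⟨c, -, rfl⟩ := hB
  ext d
  exact ⟨fun hd => ⟨hd.1, ha.2.symm.trans hd.2⟩, fun hd => ⟨hd.1, ha.2.trans hd.2⟩⟩

theorem eq_of_mem (hB : IsBlock S B) (hB' : IsBlock S B') {x : Cell} (hx : x ∈ B)
    (hx' : x ∈ B') : B = B' :=
  (hB.eq_setOf_connIn hx).trans (hB'.eq_setOf_connIn hx').symm

theorem mem_of_adj (hB : IsBlock S B) {x y : Cell} (hx : x ∈ B) (hy : y ∈ S) (hxy : Adj x y) :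
    y ∈ B := by
  rw [hB.eq_setOf_connIn hx]
  exact ⟨hy, .single ⟨hB.subset hx, hy, hxy⟩⟩

theorem eq_singleton_of_isolated (hB : IsBlock S B) {a : Cell} (ha : a ∈ B)
    (hiso : ∀ x ∈ S, ¬ Adj a x) : B = {a} := by
  refine Set.eq_singleton_iff_unique_mem.2 ⟨ha, fun d hd => ?_⟩
  rw [hB.eq_setOf_connIn ha] at hd
  rcases Relation.ReflTransGen.cases_head hd.2 with rfl | ⟨x, ⟨-, hx, hax⟩, -⟩
  · rfl
  · exact absurd hax (hiso x hx)

theorem finite (hB : IsBlock S B) {p q : ℕ} (hS : S ⊆ board p q) : B.Finite :=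
  (board_finite p q).subset (hB.subset.trans hS)

end IsBlock

namespace Meets

variable {B : Set Cell} {A : List Cell}

theorem exists_getElem_mem (h : Meets B A) :
    ∃ i, ∃ hi : i < A.length, A[i] ∈ B := by
  obtain ⟨c, hcB, hcA⟩ := h
  obtain ⟨i, hi, rfl⟩ := List.getElem_of_mem hcA
  exact ⟨i, hi, hcB⟩

theorem firstHit_mem : Meets B A → firstHit A B ∈ {i | ∃ hi : i < A.length, A[i] ∈ B} :=
  fun h => Nat.sInf_mem h.exists_getElem_mem

theorem firstHit_lt (h : Meets B A) : firstHit A B < A.length :=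
  h.firstHit_mem.1

theorem getElem_firstHit_mem (h : Meets B A) : A[firstHit A B]'h.firstHit_lt ∈ B :=
  h.firstHit_mem.2

end Meets

theorem IsBlock.eq_of_firstHit_eq {S B B' : Set Cell} {A : List Cell} (hB : IsBlock S B)
    (hB' : IsBlock S B') (hM : Meets B A) (hM' : Meets B' A)
    (h : firstHit A B = firstHit A B') : B = B' :=
  hB.eq_of_mem hB' hM.getElem_firstHit_mem (by simpa only [h] using hM'.getElem_firstHit_mem)

theorem Nat.exists_first_two {T : Set ℕ} {a b : ℕ} (ha : a ∈ T) (hb : b ∈ T) (hab : a ≠ b) :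
    ∃ m ∈ T, ∃ m' ∈ T, m < m' ∧ ∀ i ∈ T, i = m ∨ m' ≤ i := by
  have hT' : (T \ {sInf T}).Nonempty := by
    by_cases h : a = sInf T
    · exact ⟨b, hb, fun hb' => hab (h.trans hb'.symm)⟩
    · exact ⟨a, ha, h⟩
  obtain ⟨hm'T, hm'⟩ := Nat.sInf_mem hT'
  refine ⟨sInf T, Nat.sInf_mem ⟨a, ha⟩, _, hm'T,
    lt_of_le_of_ne (Nat.sInf_le hm'T) (Ne.symm hm'), fun i hi => ?_⟩
  by_cases h : i = sInf T
  · exact .inl h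
  · exact .inr (Nat.sInf_le ⟨hi, h⟩)

namespace IsValidSolution

variable {I : EvoInstance} {S B : Set Cell} {A : List Cell}

theorem eq_of_mem_arrow (hS : IsValidSolution I S) (hA : A ∈ I.arrows) (hB : IsBlock S B)
    {c d : Cell} (hc : c ∈ B) (hcA : c ∈ A) (hd : d ∈ B) (hdA : d ∈ A) : c = d :=
  (hS.2.1 B hB).unique ⟨hc, A, hA, hcA⟩ ⟨hd, A, hA, hdA⟩

theorem mem_arrow_iff (hS : IsValidSolution I S) (hA : A ∈ I.arrows) (hB : IsBlock S B)
    (hM : Meets B A) {c : Cell} : c ∈ B ∧ c ∈ A ↔ c = A[firstHit A B]'hM.firstHit_lt := by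
  refine ⟨fun hc => hS.eq_of_mem_arrow hA hB hc.1 hc.2 hM.getElem_firstHit_mem
    (List.getElem_mem _), ?_⟩
  rintro rfl
  exact ⟨hM.getElem_firstHit_mem, List.getElem_mem _⟩

theorem exists_first_two_blocks (hS : IsValidSolution I S) (hA : A ∈ I.arrows) :
    ∃ B₁ B₂, Consecutive S A B₁ B₂ ∧
      ∀ B, IsBlock S B → Meets B A → B = B₁ ∨ firstHit A B₂ ≤ firstHit A B := by
  obtain ⟨C, C', hC, hC', hCC', hMC, hMC'⟩ := hS.2.2.1 A hA
  obtain ⟨_, ⟨B₁, hB₁, hM₁, rfl⟩, _, ⟨B₂, hB₂, hM₂, rfl⟩, hlt, hfirst⟩ :=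
    Nat.exists_first_two (T := {i | ∃ B, IsBlock S B ∧ Meets B A ∧ firstHit A B = i})
      ⟨C, hC, hMC, rfl⟩ ⟨C', hC', hMC', rfl⟩
      fun h => hCC' (hC.eq_of_firstHit_eq hC' hMC hMC' h)
  refine ⟨B₁, B₂, ⟨hB₁, hB₂, hM₁, hM₂, hlt, fun B hB hM => ?_⟩, fun B hB hM => ?_⟩
  · exact (hfirst _ ⟨B, hB, hM, rfl⟩).imp le_of_eq id
  · exact (hfirst _ ⟨B, hB, hM, rfl⟩).imp (hB.eq_of_firstHit_eq hB₁ hM hM₁) id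

end IsValidSolution

namespace Fenced

variable {I : EvoInstance} {S B B' : Set Cell} {A : List Cell}

theorem eq_singleton_of_getElem_mem (hfence : Fenced I A) (hS : IsValidSolution I S)
    (hA : A ∈ I.arrows) (hB : IsBlock S B) {i : ℕ} (h1 : 0 < i) (h2 : i + 1 < A.length)
    (hi : A[i] ∈ B) : B = {A[i]} := by
  refine hB.eq_singleton_of_isolated hi fun x hxS hadj => hadj.ne ?_
  have hxW : I.White x := hS.1.1 x hxS
  have hxA : x ∈ A := by
    by_contra hxA
    exact hxW.2 (hfence i h1 h2 x hxW.1 hadj.symm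
      (fun h => hxA (h ▸ List.getElem_mem _)) (fun h => hxA (h ▸ List.getElem_mem _)))
  exact hS.eq_of_mem_arrow hA hB hi (List.getElem_mem _) (hB.mem_of_adj hi hxS hadj) hxA

theorem firstHit_eq_of_consecutive (hfence : Fenced I A) (hS : IsValidSolution I S)
    (hA : A ∈ I.arrows) (hcons : Consecutive S A B B') : firstHit A B' = A.length - 1 := by
  have hcard : B'.ncard = B.ncard + 1 := (hS.2.2.2 A hA B B' hcons).1
  obtain ⟨hB, hB', hM, hM', hlt, -⟩ := hcons
  have hpos : 0 < B.ncard :=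
    (Set.ncard_pos (hB.finite fun c hc => (hS.1.1 c hc).1)).2 ⟨_, hM.getElem_firstHit_mem⟩
  have := hM'.firstHit_lt
  by_contra hne
  have hsingle := hfence.eq_singleton_of_getElem_mem hS hA hB' (by omega) (by omega)
    hM'.getElem_firstHit_mem
  rw [hsingle, Set.ncard_singleton] at hcard
  omega

end Fenced

theorem evolomino_fenced_arrow_general
    (I : EvoInstance)
    (S : Set Cell) (hS : IsValidSolution I S)
    (A : List Cell) (hA : A ∈ I.arrows) (hAne : A ≠ [])
    (hfence : Fenced I A) :
    ∃ B₁ B₂ : Set Cell,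
      IsBlock S B₁ ∧ IsBlock S B₂ ∧ B₁ ≠ B₂ ∧ Meets B₁ A ∧ Meets B₂ A ∧
      (∀ B, IsBlock S B → Meets B A → B = B₁ ∨ B = B₂) ∧
      firstHit A B₁ < firstHit A B₂ ∧
      (∃! c, c ∈ B₁ ∧ c ∈ A) ∧
      (∀ c ∈ B₁, c ∈ A → c ≠ A.getLast hAne) ∧
      (∀ c, (c ∈ B₂ ∧ c ∈ A) ↔ c = A.getLast hAne) ∧
      B₂.ncard = B₁.ncard + 1 ∧
      ∃ v : Cell, v +ᵥ B₁ ⊆ B₂ := by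
  obtain ⟨B₁, B₂, hcons, hfirst⟩ := hS.exists_first_two_blocks hA
  have hlast := hfence.firstHit_eq_of_consecutive hS hA hcons
  obtain ⟨hcard, v, hv⟩ := hS.2.2.2 A hA B₁ B₂ hcons
  obtain ⟨hB₁, hB₂, hM₁, hM₂, hlt, -⟩ := hcons
  have hgetLast : A.getLast hAne = A[firstHit A B₂]'hM₂.firstHit_lt := by
    simp only [List.getLast_eq_getElem, hlast]
  refine ⟨B₁, B₂, hB₁, hB₂, fun h => hlt.ne (congrArg _ h), hM₁, hM₂, fun B hB hM => ?_, hlt,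
    ⟨_, (hS.mem_arrow_iff hA hB₁ hM₁).2 rfl, fun c hc => (hS.mem_arrow_iff hA hB₁ hM₁).1 hc⟩,
    fun c hc _ hc' => ?_, fun c => by rw [hS.mem_arrow_iff hA hB₂ hM₂, hgetLast], hcard, v, hv⟩
  · refine (hfirst B hB hM).imp_right fun h => hB.eq_of_firstHit_eq hB₂ hM hM₂ ?_
    have := hM.firstHit_lt
    omega
  · have hc₂ : c ∈ B₂ := hc' ▸ hgetLast ▸ hM₂.getElem_firstHit_mem
    exact hlt.ne (congrArg _ (hB₁.eq_of_mem hB₂ hc hc₂))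

/-- A fenced arrow in a valid solution meets exactly two blocks:
the first one contains exactly one arrow cell, which is not the last cell `a_L`,
and the second one intersects the arrow exactly in `a_L`, has one more cell than
the first block, and contains a translate of it. -/
theorem evolomino_fenced_arrow
    (I : EvoInstance) (hWF : I.WellFormed)
    (S : Set Cell) (hS : IsValidSolution I S)
    (A : List Cell) (hA : A ∈ I.arrows) (hAne : A ≠ [])
    (hfence : Fenced I A) :
    ∃ B₁ B₂ : Set Cell,
      IsBlock S B₁ ∧ IsBlock S B₂ ∧ B₁ ≠ B₂ ∧ Meets B₁ A ∧ Meets B₂ A ∧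
      (∀ B, IsBlock S B → Meets B A → B = B₁ ∨ B = B₂) ∧
      firstHit A B₁ < firstHit A B₂ ∧
      (∃! c, c ∈ B₁ ∧ c ∈ A) ∧
      (∀ c ∈ B₁, c ∈ A → c ≠ A.getLast hAne) ∧
      (∀ c, (c ∈ B₂ ∧ c ∈ A) ↔ c = A.getLast hAne) ∧
      B₂.ncard = B₁.ncard + 1 ∧
      ∃ v : Cell, v +ᵥ B₁ ⊆ B₂ :=
  evolomino_fenced_arrow_general I S hS A hA hAne hfence
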